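/- arXiv:2412.20456 — 4 statements merged into one kernel-verified Lean document; each statement's English description precedes it below -/
import Mathlib

section
/- Let n ≥ 1, T_1, …, T_n ∈ ℝ, and let σ(t) = 1/(1 + e^{−t}). Define the two-threshold rule f by f(x) = 1 if #{i : x_i > T_i} > n/2 and f(x) = 0 if #{i : x_i > T_i} < n/2, and for a, b > 0 define the n-hidden-node network output f̂_{a,b}(x) = σ( b · ( Σ_{j=1}^n σ( a · (x_j − T_j) ) − n/2 ) ). Then for every η > 0 and every δ ∈ (0,1) there exist a, b > 0 such that for every x ∈ ℝⁿ satisfying |x_i − T_i| ≥ η for all i and #{i : x_i > T_i} ≠ n/2, one has |f̂_{a,b}(x) − f(x)| ≤ δ. -/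
noncomputable def sigmoid (t : ℝ) : ℝ := 1 / (1 + Real.exp (-t))

/-- The two-threshold rule: output 1 iff more than half of the features exceed
their per-feature thresholds. -/
noncomputable def twoThresholdRule (n : ℕ) (T : Fin n → ℝ) (x : Fin n → ℝ) : ℝ :=
  if ((n : ℝ) / 2 < ((Finset.univ.filter fun i => T i < x i).card : ℝ)) then 1 else 0

/-- The `n`-hidden-node MLP approximating the two-threshold rule. -/
noncomputable def twoThresholdNet (n : ℕ) (T : Fin n → ℝ) (a b : ℝ) (x : Fin n → ℝ) : ℝ :=
  sigmoid (b * ((∑ j, sigmoid (a * (x j - T j))) - (n : ℝ) / 2))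

/-! The sigmoid differs from the step function `1{t > 0}` by at most `exp (-|t|)`. A hidden
node thus reproduces its indicator `1{x_i > T_i}` up to `exp (-a η)` on inputs with margin `η`,
so for `a` large the hidden layer sums to the count `k` up to `1/4`. As `2k - n` is a nonzero
integer, `k` is at distance at least `1/2` from `n/2`; hence the output node sees an
argument on the same side of `n/2` as `k` with margin `1/4`, and for `b` large it reproduces
`1{k > n/2}` up to `exp (-b/4)`. -/

open Filter Topology

lemma sigmoid_eq_real_sigmoid : sigmoid = Real.sigmoid := by
  ext t
  rw [sigmoid, Real.sigmoid_def, one_div]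

namespace Real

lemma sigmoid_le_exp (t : ℝ) : sigmoid t ≤ exp t :=
  calc sigmoid t = sigmoid t * exp (-t) * exp t := by
        rw [mul_assoc, ← exp_add, neg_add_cancel, exp_zero, mul_one]
    _ = sigmoid (-t) * exp t := by rw [sigmoid_mul_rexp_neg]
    _ ≤ exp t := mul_le_of_le_one_left (exp_pos t).le (sigmoid_le_one _)

lemma abs_sigmoid_sub_indicator_le (t : ℝ) :
    |sigmoid t - if 0 < t then 1 else 0| ≤ exp (-|t|) := by
  split_ifs with ht
  · rw [abs_of_pos ht, abs_sub_comm, abs_of_nonneg (sub_nonneg.2 (sigmoid_le_one t)),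
      ← sigmoid_neg]
    exact sigmoid_le_exp _
  · rw [sub_zero, abs_of_pos (sigmoid_pos t), abs_of_nonpos (not_lt.1 ht), neg_neg]
    exact sigmoid_le_exp t

lemma abs_sigmoid_mul_sub_indicator_le {c η t : ℝ} (hc : 0 < c) (ht : η ≤ |t|) :
    |sigmoid (c * t) - if 0 < t then 1 else 0| ≤ exp (-(c * η)) := by
  have h := abs_sigmoid_sub_indicator_le (c * t)
  simp only [abs_mul, abs_of_pos hc, mul_pos_iff_of_pos_left hc] at h
  exact h.trans (exp_le_exp.2 (neg_le_neg (mul_le_mul_of_nonneg_left ht hc.le)))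

end Real

lemma abs_sum_sigmoid_sub_card_le {ι : Type*} [Fintype ι] {T x : ι → ℝ} {a η : ℝ}
    (ha : 0 < a) (hx : ∀ i, η ≤ |x i - T i|) :
    |∑ i, Real.sigmoid (a * (x i - T i)) - ((Finset.univ.filter fun i => T i < x i).card : ℝ)|
      ≤ Fintype.card ι * Real.exp (-(a * η)) := by
  rw [← Finset.sum_boole, ← Finset.sum_sub_distrib]
  calc |∑ i, (Real.sigmoid (a * (x i - T i)) - if T i < x i then 1 else 0)|
      ≤ ∑ i, |Real.sigmoid (a * (x i - T i)) - if T i < x i then 1 else 0| :=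
        Finset.abs_sum_le_sum_abs _ _
    _ ≤ ∑ _i : ι, Real.exp (-(a * η)) := Finset.sum_le_sum fun i _ => by
        simpa only [sub_pos] using Real.abs_sigmoid_mul_sub_indicator_le ha (hx i)
    _ = Fintype.card ι * Real.exp (-(a * η)) := by
        rw [Finset.sum_const, Finset.card_univ, nsmul_eq_mul]

lemma half_le_abs_natCast_sub_half {k n : ℕ} (h : (k : ℝ) ≠ n / 2) :
    1 / 2 ≤ |(k : ℝ) - n / 2| := by
  have hcast : ((2 * k - n : ℤ) : ℝ) = 2 * ((k : ℝ) - n / 2) := by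
    push_cast
    ring
  have hne : (2 * k - n : ℤ) ≠ 0 := fun h0 => h (by
    have h0' := congrArg (Int.cast : ℤ → ℝ) h0
    rw [hcast, Int.cast_zero] at h0'
    linarith)
  have hone : (1 : ℝ) ≤ |((2 * k - n : ℤ) : ℝ)| := by
    rw [← Int.cast_abs]
    exact_mod_cast Int.one_le_abs hne
  rw [hcast, abs_mul, abs_two] at hone
  linarith

lemma abs_twoThresholdNet_sub_twoThresholdRule_le {n : ℕ} {T x : Fin n → ℝ} {a b η : ℝ}
    (ha : 0 < a) (hb : 0 < b) (hx : ∀ i, η ≤ |x i - T i|)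
    (haη : n * Real.exp (-(a * η)) ≤ 1 / 4)
    (hk : ((Finset.univ.filter fun i => T i < x i).card : ℝ) ≠ (n : ℝ) / 2) :
    |twoThresholdNet n T a b x - twoThresholdRule n T x| ≤ Real.exp (-(b * (1 / 4))) := by
  rw [twoThresholdNet, twoThresholdRule, sigmoid_eq_real_sigmoid]
  set s := ∑ j, Real.sigmoid (a * (x j - T j))
  set k := (Finset.univ.filter fun i => T i < x i).card
  have hs : |s - k| ≤ 1 / 4 := by
    have h := abs_sum_sigmoid_sub_card_le ha hx
    rw [Fintype.card_fin] at h
    exact h.trans haη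
  have hkn := half_le_abs_natCast_sub_half hk
  have hmargin : 1 / 4 ≤ |s - n / 2| := by
    linarith [abs_sub_le (k : ℝ) s (n / 2), abs_sub_comm (k : ℝ) s]
  have hside : 0 < s - n / 2 ↔ (n : ℝ) / 2 < k := by
    have := abs_le.1 hs
    rcases le_abs'.1 hkn with h | h <;> constructor <;> intro <;> linarith
  simp only [← hside]
  exact Real.abs_sigmoid_mul_sub_indicator_le hb hmargin

lemma eventually_pos_and_mul_exp_neg_mul_le {c ε : ℝ} (C : ℝ) (hc : 0 < c) (hε : 0 < ε) :
    ∀ᶠ a in atTop, 0 < a ∧ C * Real.exp (-(a * c)) ≤ ε := by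
  have hlim : Tendsto (fun a => C * Real.exp (-(a * c))) atTop (𝓝 0) := by
    have h :=
      (Real.tendsto_exp_neg_atTop_nhds_zero.comp (tendsto_id.atTop_mul_const hc)).const_mul C
    rw [mul_zero] at h
    exact h
  exact (eventually_gt_atTop 0).and (hlim.eventually (ge_mem_nhds hε))

theorem two_threshold_approximation_general (n : ℕ) (T : Fin n → ℝ) :
    ∀ η > (0 : ℝ), ∀ δ ∈ Set.Ioo (0 : ℝ) 1, ∃ a > (0 : ℝ), ∃ b > (0 : ℝ),
      ∀ x : Fin n → ℝ,
        (∀ i, η ≤ |x i - T i|) →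
        (((Finset.univ.filter fun i => T i < x i).card : ℝ) ≠ (n : ℝ) / 2) →
        |twoThresholdNet n T a b x - twoThresholdRule n T x| ≤ δ := by
  intro η hη δ hδ
  have hquarter : (0 : ℝ) < 1 / 4 := by norm_num
  obtain ⟨a, ha, haη⟩ := (eventually_pos_and_mul_exp_neg_mul_le (n : ℝ) hη hquarter).exists
  obtain ⟨b, hb, hbδ⟩ := (eventually_pos_and_mul_exp_neg_mul_le 1 hquarter hδ.1).exists
  refine ⟨a, ha, b, hb, fun x hx hk => ?_⟩
  rw [one_mul] at hbδ
  exact (abs_twoThresholdNet_sub_twoThresholdRule_le ha hb hx haη hk).trans hbδ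

theorem two_threshold_approximation (n : ℕ) (hn : 1 ≤ n) (T : Fin n → ℝ) :
    ∀ η > (0 : ℝ), ∀ δ ∈ Set.Ioo (0 : ℝ) 1, ∃ a > (0 : ℝ), ∃ b > (0 : ℝ),
      ∀ x : Fin n → ℝ,
        (∀ i, η ≤ |x i - T i|) →
        (((Finset.univ.filter fun i => T i < x i).card : ℝ) ≠ (n : ℝ) / 2) →
        |twoThresholdNet n T a b x - twoThresholdRule n T x| ≤ δ :=
  two_threshold_approximation_general n T
end

section
/- Let ε ≥ 0 and δ ∈ [0,1], and let P and Q be probability measures on a measurable space such that for every measurable set A, Q(A) ≤ e^ε·P(A) + δ and P(A) ≤ e^ε·Q(A) + δ. Then for every measurable set S, (1/2)·Q(S) + (1/2)·P(Sᶜ) ≤ 1 − (1 − δ)/(1 + e^ε). In particular, when δ = 0 the balanced accuracy of any membership test is at most e^ε/(1 + e^ε). -/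
/-!
Apply the first inequality to `S` and the second to `Sᶜ`. Writing `q = Q(S)`, `p = P(S)` and
`e = exp ε`, this gives `q ≤ e p + δ` and `1 - p ≤ e (1 - q) + δ`, whose sum is
`(1 + e) (q - p) ≤ e - 1 + 2δ`, i.e. the bound on `(q + (1 - p)) / 2`.
-/

open MeasureTheory

lemma measureReal_le_mul_add_of_le {X : Type*} [MeasurableSpace X] {μ ν : Measure X}
    [IsFiniteMeasure ν] {a b : ℝ} (ha : 0 ≤ a) (hb : 0 ≤ b) {A : Set X}
    (h : μ A ≤ ENNReal.ofReal a * ν A + ENNReal.ofReal b) :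
    μ.real A ≤ a * ν.real A + b := by
  have := ENNReal.toReal_mono (by finiteness) h
  rwa [ENNReal.toReal_add (by finiteness) (by finiteness), ENNReal.toReal_mul,
    ENNReal.toReal_ofReal ha, ENNReal.toReal_ofReal hb] at this

lemma half_add_half_one_sub_le {q p e δ : ℝ} (he : 0 < 1 + e) (h₁ : q ≤ e * p + δ)
    (h₂ : 1 - p ≤ e * (1 - q) + δ) :
    2⁻¹ * q + 2⁻¹ * (1 - p) ≤ 1 - (1 - δ) / (1 + e) := by
  have key : (1 + e) * (q - p) ≤ e - 1 + 2 * δ := by linarith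
  rw [le_sub_comm, div_le_iff₀ he]
  linarith

theorem balancedAccuracy_le {X : Type*} [MeasurableSpace X] {P Q : Measure X}
    [IsProbabilityMeasure P] [IsProbabilityMeasure Q] {e δ : ℝ} (he : 0 ≤ e) (hδ : 0 ≤ δ)
    {S : Set X} (hS : MeasurableSet S)
    (hQP : Q S ≤ ENNReal.ofReal e * P S + ENNReal.ofReal δ)
    (hPQ : P Sᶜ ≤ ENNReal.ofReal e * Q Sᶜ + ENNReal.ofReal δ) :
    2⁻¹ * Q S + 2⁻¹ * P Sᶜ ≤ ENNReal.ofReal (1 - (1 - δ) / (1 + e)) := by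
  have h₁ := measureReal_le_mul_add_of_le he hδ hQP
  have h₂ := measureReal_le_mul_add_of_le he hδ hPQ
  rw [probReal_compl_eq_one_sub hS, probReal_compl_eq_one_sub hS] at h₂
  calc 2⁻¹ * Q S + 2⁻¹ * P Sᶜ = ENNReal.ofReal (2⁻¹ * Q.real S + 2⁻¹ * (1 - P.real S)) := by
        rw [← probReal_compl_eq_one_sub hS, ENNReal.ofReal_add (by positivity) (by positivity),
          ENNReal.ofReal_mul (by norm_num), ENNReal.ofReal_mul (by norm_num),
          ofReal_measureReal, ofReal_measureReal, ENNReal.ofReal_inv_of_pos two_pos]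
        norm_num
    _ ≤ _ := ENNReal.ofReal_le_ofReal (half_add_half_one_sub_le (by linarith) h₁ h₂)

theorem dp_balanced_accuracy_bound_general
    {X : Type*} [MeasurableSpace X] (P Q : Measure X)
    [IsProbabilityMeasure P] [IsProbabilityMeasure Q]
    (ε δ : ℝ) (hδ : δ ∈ Set.Icc (0 : ℝ) 1)
    (hQP : ∀ A : Set X, MeasurableSet A →
      Q A ≤ ENNReal.ofReal (Real.exp ε) * P A + ENNReal.ofReal δ)
    (hPQ : ∀ A : Set X, MeasurableSet A →
      P A ≤ ENNReal.ofReal (Real.exp ε) * Q A + ENNReal.ofReal δ) :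
    (∀ S : Set X, MeasurableSet S →
      2⁻¹ * Q S + 2⁻¹ * P Sᶜ ≤ ENNReal.ofReal (1 - (1 - δ) / (1 + Real.exp ε))) ∧
    (δ = 0 → ∀ S : Set X, MeasurableSet S →
      2⁻¹ * Q S + 2⁻¹ * P Sᶜ ≤ ENNReal.ofReal (Real.exp ε / (1 + Real.exp ε))) := by
  have bound : ∀ S : Set X, MeasurableSet S →
      2⁻¹ * Q S + 2⁻¹ * P Sᶜ ≤ ENNReal.ofReal (1 - (1 - δ) / (1 + Real.exp ε)) :=
    fun S hS ↦ balancedAccuracy_le (Real.exp_pos ε).le hδ.1 hS (hQP S hS) (hPQ Sᶜ hS.compl)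
  refine ⟨bound, ?_⟩
  rintro rfl S hS
  have h := bound S hS
  rwa [sub_zero, one_sub_div (by positivity : 1 + Real.exp ε ≠ 0), add_sub_cancel_left] at h

/-- If `Q` (member output distribution) and `P` (non-member output distribution)
are `(ε, δ)`-indistinguishable, then the balanced accuracy of any membership test
`S` is at most `1 − (1−δ)/(1+e^ε)`; in particular, when `δ = 0` it is at most
`e^ε/(1+e^ε)`. -/
theorem dp_balanced_accuracy_bound
    {X : Type*} [MeasurableSpace X] (P Q : Measure X)
    [IsProbabilityMeasure P] [IsProbabilityMeasure Q]
    (ε δ : ℝ) (hε : 0 ≤ ε) (hδ : δ ∈ Set.Icc (0 : ℝ) 1)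
    (hQP : ∀ A : Set X, MeasurableSet A →
      Q A ≤ ENNReal.ofReal (Real.exp ε) * P A + ENNReal.ofReal δ)
    (hPQ : ∀ A : Set X, MeasurableSet A →
      P A ≤ ENNReal.ofReal (Real.exp ε) * Q A + ENNReal.ofReal δ) :
    (∀ S : Set X, MeasurableSet S →
      2⁻¹ * Q S + 2⁻¹ * P Sᶜ ≤ ENNReal.ofReal (1 - (1 - δ) / (1 + Real.exp ε))) ∧
    (δ = 0 → ∀ S : Set X, MeasurableSet S →
      2⁻¹ * Q S + 2⁻¹ * P Sᶜ ≤ ENNReal.ofReal (Real.exp ε / (1 + Real.exp ε))) :=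
  dp_balanced_accuracy_bound_general P Q ε δ hδ hQP hPQ
end

section
/- Let f : ℝ → [0, ∞) be a probability density function that is even (f(−x) = f(x) for all x) and nonincreasing on [0, ∞), and let μ₀ < μ₁ be real numbers. For t ∈ ℝ define acc(t) = (1/2)·∫_t^∞ f(x − μ₁) dx + (1/2)·∫_{−∞}^t f(x − μ₀) dx. Then acc(t) ≤ acc((μ₀ + μ₁)/2) for every t ∈ ℝ; i.e., the midpoint threshold maximizes the balanced accuracy among all threshold tests. -/
open MeasureTheory

/-- For a symmetric unimodal density `f` and member/non-member score densities
`f(· − μ₁)` and `f(· − μ₀)` with `μ₀ < μ₁`, the balanced accuracy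
`acc(t) = (1/2)∫_{[t,∞)} f(x−μ₁) dx + (1/2)∫_{(−∞,t)} f(x−μ₀) dx` of the
threshold test is maximized at the midpoint threshold `t = (μ₀+μ₁)/2`. -/
theorem midpoint_threshold_optimal
    (f : ℝ → ℝ) (hf_nonneg : ∀ x, 0 ≤ f x)
    (hf_int : Integrable f)
    (hf_density : ∫ x, f x = 1)
    (hf_even : ∀ x, f (-x) = f x)
    (hf_mono : AntitoneOn f (Set.Ici (0 : ℝ)))
    (μ₀ μ₁ : ℝ) (hμ : μ₀ < μ₁) :
    ∀ t : ℝ,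
      (1 / 2) * (∫ x in Set.Ici t, f (x - μ₁)) + (1 / 2) * (∫ x in Set.Iio t, f (x - μ₀))
        ≤ (1 / 2) * (∫ x in Set.Ici ((μ₀ + μ₁) / 2), f (x - μ₁))
          + (1 / 2) * (∫ x in Set.Iio ((μ₀ + μ₁) / 2), f (x - μ₀)) := by
  intro t
  set m := (μ₀ + μ₁) / 2 with hm
  have habs : ∀ y : ℝ, f |y| = f y := by
    intro y
    rcases abs_choice y with h | h
    · rw [h]
    · rw [h, hf_even]
  have hi₁ : Integrable (fun x => f (x - μ₁)) := hf_int.comp_sub_right μ₁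
  have hi₀ : Integrable (fun x => f (x - μ₀)) := hf_int.comp_sub_right μ₀
  have hkey : ∀ x, m ≤ x → f (x - μ₀) ≤ f (x - μ₁) := by
    intro x hx
    have hx' : (μ₀ + μ₁) / 2 ≤ x := hx
    have h0 : 0 ≤ x - μ₀ := by linarith
    have h1 : |x - μ₁| ≤ |x - μ₀| := by
      rw [abs_of_nonneg h0, abs_le]
      constructor <;> linarith
    calc f (x - μ₀) = f |x - μ₀| := (habs _).symm
      _ ≤ f |x - μ₁| := hf_mono (Set.mem_Ici.2 (abs_nonneg _)) (Set.mem_Ici.2 (abs_nonneg _)) h1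
      _ = f (x - μ₁) := habs _
  have hkey' : ∀ x, x ≤ m → f (x - μ₁) ≤ f (x - μ₀) := by
    intro x hx
    have hx' : x ≤ (μ₀ + μ₁) / 2 := hx
    have h0 : x - μ₁ ≤ 0 := by linarith
    have h1 : |x - μ₀| ≤ |x - μ₁| := by
      rw [abs_of_nonpos h0, abs_le]
      constructor <;> linarith
    calc f (x - μ₁) = f |x - μ₁| := (habs _).symm
      _ ≤ f |x - μ₀| := hf_mono (Set.mem_Ici.2 (abs_nonneg _)) (Set.mem_Ici.2 (abs_nonneg _)) h1
      _ = f (x - μ₀) := habs _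
  rcases le_total t m with htm | hmt
  · -- t ≤ m
    have hsplit₁ : (∫ x in Set.Ici t, f (x - μ₁))
        = (∫ x in Set.Ico t m, f (x - μ₁)) + (∫ x in Set.Ici m, f (x - μ₁)) := by
      rw [← setIntegral_union (by
          rw [Set.disjoint_left]; intro x hx1 hx2; exact absurd hx2 (not_le.2 hx1.2))
        measurableSet_Ici hi₁.integrableOn hi₁.integrableOn,
        Set.Ico_union_Ici_eq_Ici htm]
    have hsplit₀ : (∫ x in Set.Iio m, f (x - μ₀))
        = (∫ x in Set.Iio t, f (x - μ₀)) + (∫ x in Set.Ico t m, f (x - μ₀)) := by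
      rw [← setIntegral_union (by
          rw [Set.disjoint_left]; intro x hx1 hx2; exact absurd hx2.1 (not_le.2 hx1))
        measurableSet_Ico hi₀.integrableOn hi₀.integrableOn,
        Set.Iio_union_Ico_eq_Iio htm]
    have hmono : (∫ x in Set.Ico t m, f (x - μ₁)) ≤ ∫ x in Set.Ico t m, f (x - μ₀) :=
      setIntegral_mono_on hi₁.integrableOn hi₀.integrableOn measurableSet_Ico
        (fun x hx => hkey' x hx.2.le)
    rw [hsplit₁, hsplit₀]
    linarith
  · -- m ≤ t
    have hsplit₁ : (∫ x in Set.Ici m, f (x - μ₁))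
        = (∫ x in Set.Ico m t, f (x - μ₁)) + (∫ x in Set.Ici t, f (x - μ₁)) := by
      rw [← setIntegral_union (by
          rw [Set.disjoint_left]; intro x hx1 hx2; exact absurd hx2 (not_le.2 hx1.2))
        measurableSet_Ici hi₁.integrableOn hi₁.integrableOn,
        Set.Ico_union_Ici_eq_Ici hmt]
    have hsplit₀ : (∫ x in Set.Iio t, f (x - μ₀))
        = (∫ x in Set.Iio m, f (x - μ₀)) + (∫ x in Set.Ico m t, f (x - μ₀)) := by
      rw [← setIntegral_union (by
          rw [Set.disjoint_left]; intro x hx1 hx2; exact absurd hx2.1 (not_le.2 hx1))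
        measurableSet_Ico hi₀.integrableOn hi₀.integrableOn,
        Set.Iio_union_Ico_eq_Iio hmt]
    have hmono : (∫ x in Set.Ico m t, f (x - μ₀)) ≤ ∫ x in Set.Ico m t, f (x - μ₁) :=
      setIntegral_mono_on hi₀.integrableOn hi₁.integrableOn measurableSet_Ico
        (fun x hx => hkey x hx.1)
    rw [hsplit₁, hsplit₀]
    linarith
end

section
/- Let ε ≥ 0 and let P and Q be probability measures on a measurable space X such that for every measurable set A, Q(A) ≤ e^ε·P(A) and P(A) ≤ e^ε·Q(A). Fix k ≥ 1 and i ∈ {0, 1, …, ⌊k/2⌋}, and set δ_i = ( Σ_{l=0}^{i−1} C(k,l)·( e^{(k−l)ε} − e^{(k−2i+l)ε} ) ) / (1 + e^ε)^k. Then the k-fold product measures satisfy, for every measurable set A ⊆ X^k, Q^{⊗k}(A) ≤ e^{(k−2i)ε}·P^{⊗k}(A) + δ_i. -/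
/-!
Write `Q = F • P` with `m ≤ F ≤ M`, where `m = e^{-ε}` and `M = e^ε`.
Let `H_n(c, a) = E[(c L - a)₊]`, where `L` is a product of `n` independent factors equal to `M`
with probability `p` and to `m` with probability `q`: the two-point law on `{m, M}` with mean `1`
(randomized response).
By induction on `n`, `Q^{⊗n}(A) ≤ a P^{⊗n}(A) + H_n(1, a)` for all `a ≥ 0`. Conditioning on the
first coordinate `x` and applying the bound for `n` to the slice with threshold `a / F x` costs
`H_n(F x, a)`. This is convex in `F x ∈ [m, M]`, hence below its chord, which is affine in `F x`,
so its `P`-integral is at most the chord at `∫ F dP = 1`, that is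
`q H_n(m, a) + p H_n(M, a) = H_{n+1}(1, a)`. Finally `H_k(1, e^{(k-2i)ε}) = δ_i`.
-/

open MeasureTheory Finset Real
open scoped ENNReal

/-- `E[(c L - a)₊]` for `L = M ^ J * m ^ (n - J)`, with `J` binomial with weights `p, q`. -/
noncomputable def binomialHockeyStick (p q M m : ℝ) (n : ℕ) (c a : ℝ) : ℝ :=
  ∑ jl ∈ antidiagonal n,
    (n.choose jl.1 : ℝ) * p ^ jl.1 * q ^ jl.2 * max (c * (M ^ jl.1 * m ^ jl.2) - a) 0

lemma max_mul_sub_zero_le_chord {s c t : ℝ} (hs : s ≤ c) (ht : c ≤ t) (u a : ℝ) :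
    (t - s) * max (c * u - a) 0 ≤ (t - c) * max (s * u - a) 0 + (c - s) * max (t * u - a) 0 := by
  have h₁ := mul_le_mul_of_nonneg_left (le_max_left (s * u - a) 0) (sub_nonneg.2 ht)
  have h₂ := mul_le_mul_of_nonneg_left (le_max_left (t * u - a) 0) (sub_nonneg.2 hs)
  have h₃ := mul_nonneg (sub_nonneg.2 ht) (le_max_right (s * u - a) 0)
  have h₄ := mul_nonneg (sub_nonneg.2 hs) (le_max_right (t * u - a) 0)
  rcases le_total (c * u - a) 0 with h | h
  · rw [max_eq_right h]; linarith
  · rw [max_eq_left h]; linarith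

section binomialHockeyStick

variable {p q M m : ℝ} (n : ℕ)

lemma binomialHockeyStick_nonneg (hp : 0 ≤ p) (hq : 0 ≤ q) (c a : ℝ) :
    0 ≤ binomialHockeyStick p q M m n c a :=
  sum_nonneg fun _ _ => mul_nonneg (by positivity) (le_max_right _ _)

lemma binomialHockeyStick_eq_mul {c : ℝ} (hc : 0 < c) (a : ℝ) :
    binomialHockeyStick p q M m n c a = c * binomialHockeyStick p q M m n 1 (a / c) := by
  simp only [binomialHockeyStick, mul_sum, one_mul]
  refine sum_congr rfl fun jl _ => ?_
  have hmax : max (c * (M ^ jl.1 * m ^ jl.2) - a) 0 = c * max (M ^ jl.1 * m ^ jl.2 - a / c) 0 := by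
    rw [mul_max_of_nonneg _ _ hc.le, mul_zero, mul_sub, mul_div_cancel₀ _ hc.ne']
  rw [hmax]
  ring

lemma binomialHockeyStick_le_chord (hp : 0 ≤ p) (hq : 0 ≤ q) {s c t : ℝ} (hs : s ≤ c)
    (ht : c ≤ t) (a : ℝ) :
    (t - s) * binomialHockeyStick p q M m n c a
      ≤ (t - c) * binomialHockeyStick p q M m n s a
        + (c - s) * binomialHockeyStick p q M m n t a := by
  simp only [binomialHockeyStick, mul_sum, ← sum_add_distrib]
  refine sum_le_sum fun jl _ => ?_
  have hw : 0 ≤ (n.choose jl.1 : ℝ) * p ^ jl.1 * q ^ jl.2 := by positivity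
  have := mul_le_mul_of_nonneg_left
    (max_mul_sub_zero_le_chord hs ht (M ^ jl.1 * m ^ jl.2) a) hw
  linarith

lemma binomialHockeyStick_succ (c a : ℝ) :
    binomialHockeyStick p q M m (n + 1) c a
      = q * binomialHockeyStick p q M m n (c * m) a
        + p * binomialHockeyStick p q M m n (c * M) a := by
  unfold binomialHockeyStick
  simp only [mul_assoc]
  rw [sum_antidiagonal_choose_succ_mul
    (fun j l => p ^ j * (q ^ l * max (c * (M ^ j * m ^ l) - a) 0)) n, mul_sum, mul_sum]
  congr 1
  · refine sum_congr rfl fun jl _ => ?_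
    ring_nf
  · refine sum_congr rfl fun jl hjl => ?_
    rw [Nat.choose_symm_of_eq_add (mem_antidiagonal.1 hjl).symm]
    ring_nf

end binomialHockeyStick

lemma randomizedResponse_summand {ε : ℝ} (hε : 0 < ε) {i j l k : ℕ} (hk : j + l = k) :
    (k.choose j : ℝ) * (1 / (1 + exp ε)) ^ j * (exp ε / (1 + exp ε)) ^ l
        * max (1 * (exp ε ^ j * exp (-ε) ^ l) - exp (((k : ℝ) - 2 * i) * ε)) 0
      = if l < i then (k.choose l : ℝ) * (exp (((k : ℝ) - l) * ε)
          - exp (((k : ℝ) - 2 * i + l) * ε)) / (1 + exp ε) ^ k else 0 := by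
  subst hk
  have hweights : (1 / (1 + exp ε)) ^ j * (exp ε / (1 + exp ε)) ^ l
      = exp (l * ε) / (1 + exp ε) ^ (j + l) := by
    rw [div_pow, div_pow, one_pow, ← exp_nat_mul, pow_add]; field_simp
  have hratio : exp ε ^ j * exp (-ε) ^ l = exp ((j - l : ℝ) * ε) := by
    rw [← exp_nat_mul, ← exp_nat_mul, ← exp_add]; ring_nf
  rw [one_mul, hratio, Nat.choose_symm_of_eq_add rfl, mul_assoc _ (_ ^ j), hweights]
  push_cast
  split_ifs with hli
  · have hlt : ((j + l : ℝ) - 2 * i) * ε < (j - l : ℝ) * ε := by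
      have : (l : ℝ) < i := by exact_mod_cast hli
      nlinarith
    rw [max_eq_left (sub_nonneg.2 (exp_le_exp.2 hlt.le))]
    have hexp : exp (l * ε) * (exp ((j - l : ℝ) * ε) - exp (((j + l : ℝ) - 2 * i) * ε))
        = exp (((j + l : ℝ) - l) * ε) - exp (((j + l : ℝ) - 2 * i + l) * ε) := by
      rw [mul_sub, ← exp_add, ← exp_add]; ring_nf
    rw [← hexp]
    ring
  · have hle : (j - l : ℝ) * ε ≤ ((j + l : ℝ) - 2 * i) * ε := by
      have : (i : ℝ) ≤ l := by exact_mod_cast not_lt.1 hli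
      nlinarith
    rw [max_eq_right (sub_nonpos.2 (exp_le_exp.2 hle)), mul_zero]

lemma binomialHockeyStick_randomizedResponse {ε : ℝ} (hε : 0 < ε) {k i : ℕ} (hik : i ≤ k) :
    binomialHockeyStick ((1 - exp (-ε)) / (exp ε - exp (-ε))) ((exp ε - 1) / (exp ε - exp (-ε)))
        (exp ε) (exp (-ε)) k 1 (exp (((k : ℝ) - 2 * i) * ε))
      = (∑ l ∈ range i, (k.choose l : ℝ)
          * (exp (((k : ℝ) - l) * ε) - exp (((k : ℝ) - 2 * i + l) * ε))) / (1 + exp ε) ^ k := by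
  have hE : exp (-ε) < exp ε := exp_lt_exp.2 (by linarith)
  have hp : (1 - exp (-ε)) / (exp ε - exp (-ε)) = 1 / (1 + exp ε) := by
    rw [div_eq_div_iff (by linarith) (by positivity), exp_neg]; field_simp; ring
  have hq : (exp ε - 1) / (exp ε - exp (-ε)) = exp ε / (1 + exp ε) := by
    rw [div_eq_div_iff (by linarith) (by positivity), exp_neg]; field_simp; ring
  rw [hp, hq, binomialHockeyStick,
    sum_congr rfl fun jl hjl => randomizedResponse_summand (i := i) hε (mem_antidiagonal.1 hjl),
    ← Nat.sum_antidiagonal_swap]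
  simp only [Prod.snd_swap]
  rw [Nat.sum_antidiagonal_eq_sum_range_succ_mk, ← sum_filter, sum_div]
  congr 1
  ext l
  simp only [mem_filter, mem_range]
  omega

lemma measurable_vecCons {X : Type*} [MeasurableSpace X] {n : ℕ} :
    Measurable fun p : X × (Fin n → X) => Matrix.vecCons p.1 p.2 :=
  measurable_pi_iff.2 fun j => by
    refine Fin.cases ?_ (fun i => ?_) j
    · simpa using measurable_fst
    · exact (measurable_pi_apply i).comp measurable_snd

lemma MeasureTheory.Measure.pi_fin_succ_apply {X : Type*} [MeasurableSpace X] (μ : Measure X)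
    [SigmaFinite μ] {n : ℕ} {A : Set (Fin (n + 1) → X)} (hA : MeasurableSet A) :
    Measure.pi (fun _ => μ) A
      = ∫⁻ x, Measure.pi (fun _ : Fin n => μ) (Matrix.vecCons x ⁻¹' A) ∂μ := by
  have he := (measurePreserving_piFinSuccAbove (fun _ : Fin (n + 1) => μ) 0).symm
  rw [← he.measure_preimage hA.nullMeasurableSet, Measure.prod_apply (he.measurable hA)]
  congr! with x
  simp only [MeasurableEquiv.piFinSuccAbove_symm_apply, Fin.insertNthEquiv_zero]
  rfl

theorem exists_density_mem_Icc {X : Type*} [MeasurableSpace X] {P Q : Measure X}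
    [SigmaFinite P] [SigmaFinite Q] {m M : ℝ} (hm : 0 ≤ m) (hmM : m ≤ M)
    (hQP : ∀ A, MeasurableSet A → Q A ≤ ENNReal.ofReal M * P A)
    (hPQ : ∀ A, MeasurableSet A → ENNReal.ofReal m * P A ≤ Q A) :
    ∃ F : X → ℝ, Measurable F ∧ (∀ x, m ≤ F x ∧ F x ≤ M)
      ∧ Q = P.withDensity fun x => ENNReal.ofReal (F x) := by
  have hac : Q ≪ P := Measure.AbsolutelyContinuous.mk fun A hA hPA =>
    le_antisymm ((hQP A hA).trans_eq (by rw [hPA, mul_zero])) zero_le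
  have hub : Q.rnDeriv P ≤ᵐ[P] fun _ => ENNReal.ofReal M :=
    ae_le_of_forall_setLIntegral_le_of_sigmaFinite (Measure.measurable_rnDeriv Q P)
      fun A hA _ => by rw [Measure.setLIntegral_rnDeriv hac, setLIntegral_const]; exact hQP A hA
  have hlb : (fun _ => ENNReal.ofReal m) ≤ᵐ[P] Q.rnDeriv P :=
    ae_le_of_forall_setLIntegral_le_of_sigmaFinite measurable_const
      fun A hA _ => by rw [Measure.setLIntegral_rnDeriv hac, setLIntegral_const]; exact hPQ A hA
  -- clamping the Radon–Nikodym derivative to `[m, M]` only changes it on a `P`-null set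
  refine ⟨fun x => max m (min M (Q.rnDeriv P x).toReal),
    measurable_const.max (measurable_const.min (Measure.measurable_rnDeriv Q P).ennreal_toReal),
    fun x => ⟨le_max_left _ _, max_le hmM (min_le_left _ _)⟩, ?_⟩
  conv_lhs => rw [← Measure.withDensity_rnDeriv_eq Q P hac]
  refine withDensity_congr_ae ?_
  filter_upwards [hub, hlb] with x hxM hxm
  have hx_ne_top : Q.rnDeriv P x ≠ ⊤ := ne_top_of_le_ne_top ENNReal.ofReal_ne_top hxM
  rw [min_eq_right (ENNReal.toReal_le_of_le_ofReal (hm.trans hmM) hxM),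
    max_eq_right ((ENNReal.ofReal_le_iff_le_toReal hx_ne_top).1 hxm),
    ENNReal.ofReal_toReal hx_ne_top]

lemma pi_fin_zero_apply_le {X : Type*} [MeasurableSpace X] (P Q : Measure X) {a : ℝ} (ha : 0 ≤ a)
    {A : Set (Fin 0 → X)} (hA : MeasurableSet A) :
    Measure.pi (fun _ => Q) A
      ≤ ENNReal.ofReal a * Measure.pi (fun _ => P) A + ENNReal.ofReal (max (1 - a) 0) := by
  rw [Measure.pi_of_empty, Measure.pi_of_empty, Measure.dirac_apply' _ hA]
  by_cases hx : isEmptyElim ∈ A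
  · rw [Set.indicator_of_mem hx, Pi.one_apply, mul_one,
      ← ENNReal.ofReal_add ha (le_max_right _ _), ← ENNReal.ofReal_one]
    exact ENNReal.ofReal_le_ofReal (by linarith [le_max_left (1 - a) 0])
  · simp [Set.indicator_of_notMem hx]

theorem lintegral_binomialHockeyStick_le {X : Type*} [MeasurableSpace X] {P : Measure X}
    [IsProbabilityMeasure P] {F : X → ℝ} (hFint : Integrable F P) (hF1 : ∫ x, F x ∂P = 1)
    {m M : ℝ} (hmM : m < M) (hmF : ∀ x, m ≤ F x) (hFM : ∀ x, F x ≤ M) (n : ℕ) (a : ℝ) :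
    ∫⁻ x, ENNReal.ofReal
        (binomialHockeyStick ((1 - m) / (M - m)) ((M - 1) / (M - m)) M m n (F x) a) ∂P
      ≤ ENNReal.ofReal
        (binomialHockeyStick ((1 - m) / (M - m)) ((M - 1) / (M - m)) M m (n + 1) 1 a) := by
  set p := (1 - m) / (M - m)
  set q := (M - 1) / (M - m)
  have hp : 0 ≤ p := div_nonneg
    (by simpa [hF1] using integral_mono (integrable_const m) hFint hmF) (by linarith)
  have hq : 0 ≤ q := div_nonneg
    (by simpa [hF1] using integral_mono hFint (integrable_const M) hFM) (by linarith)
  set Hm := binomialHockeyStick p q M m n m a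
  set HM := binomialHockeyStick p q M m n M a
  -- `c ↦ α + β * c` is the chord of the convex function `c ↦ H n c a` over `[m, M]`
  set α := (M * Hm - m * HM) / (M - m) with hα
  set β := (HM - Hm) / (M - m) with hβ
  have hchord : ∀ c, m ≤ c → c ≤ M → binomialHockeyStick p q M m n c a ≤ α + β * c := by
    intro c hmc hcM
    have := binomialHockeyStick_le_chord (M := M) (m := m) n hp hq hmc hcM a
    rw [show α + β * c = ((M - c) * Hm + (c - m) * HM) / (M - m) by
      rw [hα, hβ]; field_simp; ring, le_div_iff₀ (sub_pos.2 hmM)]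
    linarith
  have hchord_integral : ∫ x, α + β * F x ∂P = binomialHockeyStick p q M m (n + 1) 1 a := by
    rw [integral_add (integrable_const α) (hFint.const_mul β), integral_const, integral_const_mul,
      hF1, binomialHockeyStick_succ, one_mul, one_mul, hα, hβ]
    simp only [probReal_univ, one_smul]
    field_simp
    ring
  calc ∫⁻ x, ENNReal.ofReal (binomialHockeyStick p q M m n (F x) a) ∂P
      ≤ ∫⁻ x, ENNReal.ofReal (α + β * F x) ∂P :=
        lintegral_mono fun x => ENNReal.ofReal_le_ofReal (hchord _ (hmF x) (hFM x))
    _ = _ := by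
        rw [← hchord_integral, ofReal_integral_eq_lintegral_ofReal
          (f := fun x => α + β * F x) ((integrable_const α).add (hFint.const_mul β))
          (ae_of_all _ fun x =>
            (binomialHockeyStick_nonneg n hp hq _ a).trans (hchord _ (hmF x) (hFM x)))]

theorem pi_apply_le_of_density_mem_Icc {X : Type*} [MeasurableSpace X] {P Q : Measure X}
    [IsProbabilityMeasure P] [IsProbabilityMeasure Q] {F : X → ℝ} (hF : Measurable F)
    {m M : ℝ} (hm : 0 < m) (hmM : m < M) (hmF : ∀ x, m ≤ F x) (hFM : ∀ x, F x ≤ M)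
    (hQ : Q = P.withDensity fun x => ENNReal.ofReal (F x))
    (n : ℕ) {a : ℝ} (ha : 0 ≤ a) {A : Set (Fin n → X)} (hA : MeasurableSet A) :
    Measure.pi (fun _ => Q) A ≤ ENNReal.ofReal a * Measure.pi (fun _ => P) A
      + ENNReal.ofReal
          (binomialHockeyStick ((1 - m) / (M - m)) ((M - 1) / (M - m)) M m n 1 a) := by
  set p := (1 - m) / (M - m)
  set q := (M - 1) / (M - m)
  have hFint : Integrable F P :=
    (integrable_const M).mono' hF.aestronglyMeasurable
      (ae_of_all _ fun x => by rw [Real.norm_of_nonneg (hm.le.trans (hmF x))]; exact hFM x)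
  have hF1 : ∫ x, F x ∂P = 1 := by
    have : ∫⁻ x, ENNReal.ofReal (F x) ∂P = 1 := by
      rw [← measure_univ (μ := Q), hQ, withDensity_apply _ MeasurableSet.univ,
        Measure.restrict_univ]
    rw [integral_eq_lintegral_of_nonneg_ae (ae_of_all _ fun x => hm.le.trans (hmF x))
      hF.aestronglyMeasurable, this, ENNReal.toReal_one]
  have hQ_lintegral : ∀ g : X → ℝ≥0∞, Measurable g →
      ∫⁻ x, g x ∂Q = ∫⁻ x, ENNReal.ofReal (F x) * g x ∂P := fun g hg => by
    rw [hQ, lintegral_withDensity_eq_lintegral_mul _ hF.ennreal_ofReal hg]; rfl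
  induction n generalizing a with
  | zero =>
    simpa [binomialHockeyStick] using pi_fin_zero_apply_le P Q ha hA
  | succ n ih =>
    have hA' : MeasurableSet ((fun p : X × (Fin n → X) => Matrix.vecCons p.1 p.2) ⁻¹' A) :=
      hA.preimage measurable_vecCons
    have hQ_slice : Measurable fun x => Measure.pi (fun _ => Q) (Matrix.vecCons x ⁻¹' A) :=
      measurable_measure_prodMk_left hA'
    have hP_slice : Measurable fun x => Measure.pi (fun _ => P) (Matrix.vecCons x ⁻¹' A) :=
      measurable_measure_prodMk_left hA'
    have hslice : ∀ x, ENNReal.ofReal (F x) * Measure.pi (fun _ => Q) (Matrix.vecCons x ⁻¹' A)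
        ≤ ENNReal.ofReal a * Measure.pi (fun _ => P) (Matrix.vecCons x ⁻¹' A)
          + ENNReal.ofReal (binomialHockeyStick p q M m n (F x) a) := by
      intro x
      have hFx : 0 < F x := hm.trans_le (hmF x)
      calc _ ≤ ENNReal.ofReal (F x) * (ENNReal.ofReal (a / F x)
              * Measure.pi (fun _ => P) (Matrix.vecCons x ⁻¹' A)
            + ENNReal.ofReal (binomialHockeyStick p q M m n 1 (a / F x))) := by
            gcongr
            exact ih (div_nonneg ha hFx.le)
              (hA.preimage (measurable_vecCons.comp measurable_prodMk_left))
        _ = _ := by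
          rw [mul_add, ← mul_assoc, ← ENNReal.ofReal_mul hFx.le, ← ENNReal.ofReal_mul hFx.le,
            mul_div_cancel₀ _ hFx.ne', ← binomialHockeyStick_eq_mul n hFx]
    calc Measure.pi (fun _ => Q) A
        = ∫⁻ x, ENNReal.ofReal (F x) * Measure.pi (fun _ => Q) (Matrix.vecCons x ⁻¹' A) ∂P := by
          rw [Measure.pi_fin_succ_apply Q hA, hQ_lintegral _ hQ_slice]
      _ ≤ ∫⁻ x, ENNReal.ofReal a * Measure.pi (fun _ => P) (Matrix.vecCons x ⁻¹' A)
            + ENNReal.ofReal (binomialHockeyStick p q M m n (F x) a) ∂P := lintegral_mono hslice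
      _ = ENNReal.ofReal a * Measure.pi (fun _ => P) A
            + ∫⁻ x, ENNReal.ofReal (binomialHockeyStick p q M m n (F x) a) ∂P := by
          rw [lintegral_add_left (hP_slice.const_mul _), lintegral_const_mul _ hP_slice,
            ← Measure.pi_fin_succ_apply P hA]
      _ ≤ _ := by
          gcongr
          exact lintegral_binomialHockeyStick_le hFint hF1 hmM hmF hFM n a

theorem optimal_composition_pure_dp_general
    {X : Type*} [MeasurableSpace X] (P Q : Measure X)
    [IsProbabilityMeasure P] [IsProbabilityMeasure Q]
    (ε : ℝ) (hε : 0 ≤ ε)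
    (hQP : ∀ A : Set X, MeasurableSet A → Q A ≤ ENNReal.ofReal (Real.exp ε) * P A)
    (hPQ : ∀ A : Set X, MeasurableSet A → P A ≤ ENNReal.ofReal (Real.exp ε) * Q A)
    (k : ℕ) (i : ℕ) (hi : i ≤ k / 2) :
    ∀ A : Set (Fin k → X), MeasurableSet A →
      (Measure.pi fun _ : Fin k => Q) A
        ≤ ENNReal.ofReal (Real.exp (((k : ℝ) - 2 * i) * ε)) * (Measure.pi fun _ : Fin k => P) A
          + ENNReal.ofReal
              ((∑ l ∈ Finset.range i, (k.choose l : ℝ)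
                  * (Real.exp (((k : ℝ) - l) * ε) - Real.exp (((k : ℝ) - 2 * i + l) * ε)))
                / (1 + Real.exp ε) ^ k) := by
  intro A hA
  rcases hε.eq_or_lt with rfl | hε
  · obtain rfl : P = Q := Measure.ext fun A hA =>
      le_antisymm (by simpa using hPQ A hA) (by simpa using hQP A hA)
    simp
  have hPQ' : ∀ A, MeasurableSet A → ENNReal.ofReal (exp (-ε)) * P A ≤ Q A := fun A hA => by
    calc ENNReal.ofReal (exp (-ε)) * P A
        ≤ ENNReal.ofReal (exp (-ε)) * (ENNReal.ofReal (exp ε) * Q A) := by gcongr; exact hPQ A hA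
      _ = Q A := by
        rw [← mul_assoc, ← ENNReal.ofReal_mul (exp_pos _).le, ← exp_add, neg_add_cancel, exp_zero,
          ENNReal.ofReal_one, one_mul]
  have hmM : exp (-ε) < exp ε := exp_lt_exp.2 (by linarith)
  obtain ⟨F, hF, hF_mem, hQ⟩ := exists_density_mem_Icc (exp_pos _).le hmM.le hQP hPQ'
  have := pi_apply_le_of_density_mem_Icc hF (exp_pos _) hmM (fun x => (hF_mem x).1)
    (fun x => (hF_mem x).2) hQ k (a := exp (((k : ℝ) - 2 * i) * ε)) (exp_pos _).le hA
  rwa [binomialHockeyStick_randomizedResponse hε (hi.trans (Nat.div_le_self k 2))] at this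

/-- Homogeneous, non-adaptive, pure-DP case of the optimal composition theorem:
if `Q(A) ≤ e^ε·P(A)` and `P(A) ≤ e^ε·Q(A)` for all measurable `A`, then the
`k`-fold product measures satisfy
`Q^{⊗k}(A) ≤ e^{(k−2i)ε}·P^{⊗k}(A) + δ_i` for every `i ∈ {0, …, ⌊k/2⌋}`, where
`δ_i = (∑_{l<i} C(k,l)·(e^{(k−l)ε} − e^{(k−2i+l)ε})) / (1+e^ε)^k`. -/
theorem optimal_composition_pure_dp
    {X : Type*} [MeasurableSpace X] (P Q : Measure X)
    [IsProbabilityMeasure P] [IsProbabilityMeasure Q]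
    (ε : ℝ) (hε : 0 ≤ ε)
    (hQP : ∀ A : Set X, MeasurableSet A → Q A ≤ ENNReal.ofReal (Real.exp ε) * P A)
    (hPQ : ∀ A : Set X, MeasurableSet A → P A ≤ ENNReal.ofReal (Real.exp ε) * Q A)
    (k : ℕ) (hk : 1 ≤ k) (i : ℕ) (hi : i ≤ k / 2) :
    ∀ A : Set (Fin k → X), MeasurableSet A →
      (Measure.pi fun _ : Fin k => Q) A
        ≤ ENNReal.ofReal (Real.exp (((k : ℝ) - 2 * i) * ε)) * (Measure.pi fun _ : Fin k => P) A
          + ENNReal.ofReal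
              ((∑ l ∈ Finset.range i, (k.choose l : ℝ)
                  * (Real.exp (((k : ℝ) - l) * ε) - Real.exp (((k : ℝ) - 2 * i + l) * ε)))
                / (1 + Real.exp ε) ^ k) :=
  optimal_composition_pure_dp_general P Q ε hε hQP hPQ k i hi
end
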